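/- arXiv:1104.3762 — 2 statements merged into one kernel-verified Lean document; each statement's English description precedes it below -/
import Mathlib

section
/- Let a ≥ 2 and b = 1 (the Brun algorithm). For Lebesgue-almost every x ∈ Λ^{a+1}, T_{a,1}^k(x) → (0,…,0) as k → ∞ and σ(x) = Σ_{k=0}^∞ (T_{a,1}^k(x))_a. -/
open MeasureTheory Filter Topology

/-- `Λⁿ`: points of `ℝⁿ` with nonnegative, nondecreasing coordinates. -/
def Lambda (n : ℕ) : Set (Fin n → ℝ) := {x | (∀ i, 0 ≤ x i) ∧ Monotone x}

/-- The vector `(x₁,…,x_a, x_{a+1}-x_a,…,x_{a+b}-x_a)` (0-based indexing). -/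
noncomputable def subVec (a b : ℕ) (x : Fin (a + b) → ℝ) : Fin (a + b) → ℝ :=
  fun j => if (j : ℕ) < a then x j else x j - x ⟨a - 1, by have := j.isLt; omega⟩

/-- The map `T_{a,b}`: nondecreasing rearrangement of `subVec a b x`. -/
noncomputable def Tab (a b : ℕ) (x : Fin (a + b) → ℝ) : Fin (a + b) → ℝ :=
  subVec a b x ∘ Tuple.sort (subVec a b x)

/-!
Write `t_k` for the pivot coordinate `(T^k x)_a`. Since `T` only subtracts `x_a` from `x_{a+1}`
and permutes, `σ(T^{k+1} x) = σ(T^k x) - t_k`, so `σ(T^k x)` decreases to a limit `L ≥ 0` and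
`Σ t_k = σ(x) - L`. If `L > 0`, the largest coordinate stays `≥ L/(a+1)` while `t_k → 0`; once
`2 t_k ≤ x_{a+1}` no reordering happens and `t_{k+1} = t_k`, so `t` is eventually a constant
tending to `0`, i.e. some `t_k = 0`. This is excluded almost surely: on each point `T` agrees with
one of finitely many invertible linear maps, so preimages of null sets under its iterates are null.
-/

-- The paper's coordinate `x_a`, at 0-based index `a - 1`.
def pivot (a b : ℕ) [NeZero b] : Fin (a + b) := ⟨a - 1, by have := NeZero.pos b; omega⟩

section

variable {a b : ℕ}

@[simp]
lemma val_pivot [NeZero b] : (pivot a b : ℕ) = a - 1 := rfl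

lemma subVec_of_lt (x : Fin (a + b) → ℝ) {j : Fin (a + b)} (hj : (j : ℕ) < a) :
    subVec a b x j = x j :=
  if_pos hj

lemma subVec_of_le [NeZero b] (x : Fin (a + b) → ℝ) {j : Fin (a + b)} (hj : a ≤ (j : ℕ)) :
    subVec a b x j = x j - x (pivot a b) :=
  if_neg hj.not_gt

lemma subVec_injective (ha : 0 < a) : Function.Injective (subVec a b) := by
  intro x y h
  funext j
  by_cases hj : (j : ℕ) < a
  · simpa [subVec, hj] using congrFun h j
  · have hp := congrFun h ⟨a - 1, by omega⟩
    have hj' := congrFun h j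
    simp only [subVec, hj, if_false, show a - 1 < a by omega, if_true] at hp hj'
    linarith

noncomputable def subVecₗ (a b : ℕ) : (Fin (a + b) → ℝ) →ₗ[ℝ] (Fin (a + b) → ℝ) where
  toFun := subVec a b
  map_add' x y := by
    funext j
    by_cases hj : (j : ℕ) < a <;> simp only [subVec, hj, if_true, if_false, Pi.add_apply]
    ring
  map_smul' c x := by
    funext j
    by_cases hj : (j : ℕ) < a <;>
      simp only [subVec, hj, if_true, if_false, Pi.smul_apply, smul_eq_mul, RingHom.id_apply]
    ring

lemma Tab_eq_subVec_of_monotone {x : Fin (a + b) → ℝ} (h : Monotone (subVec a b x)) :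
    Tab a b x = subVec a b x := by
  simp [Tab, Tuple.sort_eq_refl_iff_monotone.2 h]

lemma mapsTo_Tab : Set.MapsTo (Tab a b) (Lambda (a + b)) (Lambda (a + b)) := by
  intro x hx
  refine ⟨fun i => ?_, Tuple.monotone_sort _⟩
  change 0 ≤ subVec a b x (Tuple.sort (subVec a b x) i)
  generalize Tuple.sort (subVec a b x) i = j
  rcases lt_or_ge (j : ℕ) a with hj | hj
  · rw [subVec_of_lt x hj]
    exact hx.1 _
  · have : NeZero b := ⟨by omega⟩
    rw [subVec_of_le x hj, sub_nonneg]
    exact hx.2 (Fin.le_def.2 (by simp; omega))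

lemma sum_Tab [NeZero b] (x : Fin (a + b) → ℝ) :
    ∑ j, Tab a b x j = ∑ j, x j - b * x (pivot a b) := by
  have h₁ (i : Fin a) : subVec a b x (Fin.castAdd b i) = x (Fin.castAdd b i) :=
    subVec_of_lt x i.isLt
  have h₂ (i : Fin b) : subVec a b x (Fin.natAdd a i) = x (Fin.natAdd a i) - x (pivot a b) :=
    subVec_of_le x (Nat.le_add_right a i)
  rw [Tab, Function.comp_def, Equiv.sum_comp (Tuple.sort (subVec a b x)) (subVec a b x)]
  simp only [Fin.sum_univ_add, h₁, h₂, Finset.sum_sub_distrib, Finset.sum_const,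
    Finset.card_univ, Fintype.card_fin, nsmul_eq_mul]
  ring

lemma volume_preimage_Tab_null (ha : 0 < a) {N : Set (Fin (a + b) → ℝ)} (hN : volume N = 0) :
    volume (Tab a b ⁻¹' N) = 0 := by
  let L := LinearEquiv.ofInjectiveEndo (subVecₗ a b) (subVec_injective ha)
  have hcover : Tab a b ⁻¹' N ⊆
      ⋃ π : Equiv.Perm (Fin (a + b)), (L.trans (LinearEquiv.funCongrLeft ℝ ℝ π)) ⁻¹' N :=
    fun x hx => Set.mem_iUnion.2 ⟨Tuple.sort (subVec a b x), hx⟩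
  refine measure_mono_null hcover (measure_iUnion_null fun π => ?_)
  rw [Measure.addHaar_preimage_linearEquiv, hN, mul_zero]

end

lemma ae_forall_iterate {α : Type*} [MeasurableSpace α] {μ : Measure α} {f : α → α}
    (hf : ∀ s, μ s = 0 → μ (f ⁻¹' s) = 0) {p : α → Prop} (hp : ∀ᵐ x ∂μ, p x) :
    ∀ᵐ x ∂μ, ∀ k, p (f^[k] x) := by
  refine ae_all_iff.2 fun k => ?_
  induction k with
  | zero => exact hp
  | succ k ih =>
    simp only [Function.iterate_succ_apply]
    exact ae_iff.2 (hf _ (ae_iff.1 ih))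

lemma sum_le_card_mul_last {n : ℕ} {x : Fin (n + 1) → ℝ} (hx : Monotone x) :
    ∑ i, x i ≤ (n + 1) * x (Fin.last n) := by
  simpa using Finset.sum_le_card_nsmul Finset.univ x _ fun i _ => hx (Fin.le_last i)

lemma tendsto_zero_of_nonneg_of_tendsto_sum {ι α : Type*} [Fintype ι] {l : Filter α}
    {f : α → ι → ℝ} (hf : ∀ k i, 0 ≤ f k i) (h : Tendsto (fun k => ∑ i, f k i) l (𝓝 0)) :
    Tendsto f l (𝓝 0) :=
  tendsto_pi_nhds.2 fun i => squeeze_zero (fun k => hf k i)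
    (fun k => Finset.single_le_sum (fun j _ => hf k j) (Finset.mem_univ i)) h

section Brun

variable {a : ℕ}

lemma sum_iterate_Tab_succ (x : Fin (a + 1) → ℝ) (k : ℕ) :
    ∑ i, (Tab a 1)^[k + 1] x i = ∑ i, (Tab a 1)^[k] x i - (Tab a 1)^[k] x (pivot a 1) := by
  rw [Function.iterate_succ_apply', sum_Tab, Nat.cast_one, one_mul]

lemma monotone_subVec_of_two_mul_le {x : Fin (a + 1) → ℝ} (hx : x ∈ Lambda (a + 1))
    (h : 2 * x (pivot a 1) ≤ x (Fin.last a)) : Monotone (subVec a 1 x) := by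
  intro i j hij
  rcases lt_or_ge (j : ℕ) a with hj | hj
  · rw [subVec_of_lt x (lt_of_le_of_lt hij hj), subVec_of_lt x hj]
    exact hx.2 hij
  have hlast : x (Fin.last a) ≤ x j := hx.2 (Fin.le_def.2 hj)
  rcases lt_or_ge (i : ℕ) a with hi | hi
  · have : x i ≤ x (pivot a 1) := hx.2 (Fin.le_def.2 (by simp; omega))
    rw [subVec_of_lt x hi, subVec_of_le x hj]
    linarith
  · rw [subVec_of_le x hi, subVec_of_le x hj]
    linarith [hx.2 hij]

lemma Tab_pivot_of_two_mul_le (ha : 0 < a) {x : Fin (a + 1) → ℝ} (hx : x ∈ Lambda (a + 1))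
    (h : 2 * x (pivot a 1) ≤ x (Fin.last a)) : Tab a 1 x (pivot a 1) = x (pivot a 1) := by
  rw [Tab_eq_subVec_of_monotone (monotone_subVec_of_two_mul_le hx h),
    subVec_of_lt x (by simp; omega)]

lemma tendsto_sum_iterate_Tab_nhds_zero (ha : 0 < a) {x : Fin (a + 1) → ℝ}
    (hx : x ∈ Lambda (a + 1)) (hne : ∀ k, (Tab a 1)^[k] x (pivot a 1) ≠ 0) :
    Tendsto (fun k => ∑ i, (Tab a 1)^[k] x i) atTop (𝓝 0) := by
  set y := fun k => (Tab a 1)^[k] x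
  set S := fun k => ∑ i, y k i
  set t := fun k => y k (pivot a 1)
  have hy (k : ℕ) : y k ∈ Lambda (a + 1) := mapsTo_Tab.iterate k hx
  have hS (k : ℕ) : S (k + 1) = S k - t k := sum_iterate_Tab_succ x k
  have hS_nonneg (k : ℕ) : 0 ≤ S k := Finset.sum_nonneg fun i _ => (hy k).1 i
  have hS_anti : Antitone S := antitone_nat_of_succ_le fun k => by
    rw [hS]; linarith [(hy k).1 (pivot a 1)]
  have hbdd : BddBelow (Set.range S) := ⟨0, Set.forall_mem_range.2 hS_nonneg⟩
  set L := ⨅ k, S k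
  have hSL : Tendsto S atTop (𝓝 L) := tendsto_atTop_ciInf hS_anti hbdd
  have ht : Tendsto t atTop (𝓝 0) := by
    have := hSL.sub (hSL.comp (tendsto_add_atTop_nat 1))
    rw [sub_self] at this
    refine this.congr fun k => ?_
    simp only [Function.comp_apply, hS]
    ring
  suffices hL : L = 0 by rwa [hL] at hSL
  by_contra hL
  have hLpos : 0 < L := lt_of_le_of_ne (le_ciInf hS_nonneg) (Ne.symm hL)
  obtain ⟨K, hK⟩ := eventually_atTop.1
    (ht.eventually (gt_mem_nhds (show 0 < L / (2 * (a + 1)) by positivity)))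
  -- the last coordinate carries a fixed fraction of `σ ≥ L`, so a small pivot never gets sorted away
  have hfreeze (k : ℕ) (hk : K ≤ k) : t (k + 1) = t k := by
    have hlast : L ≤ (a + 1) * y k (Fin.last a) :=
      (ciInf_le hbdd k).trans (sum_le_card_mul_last (hy k).2)
    have htk := (lt_div_iff₀ (by positivity)).1 (hK k hk)
    have h2 : 2 * t k ≤ y k (Fin.last a) := by nlinarith
    have hstep : t (k + 1) = Tab a 1 (y k) (pivot a 1) :=
      congrFun (Function.iterate_succ_apply' (Tab a 1) k x) _
    rw [hstep]
    exact Tab_pivot_of_two_mul_le ha (hy k) h2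
  have hconst : ∀ k ≥ K, t k = t K := fun k hk =>
    Nat.le_induction rfl (fun k hk ih => (hfreeze k hk).trans ih) k hk
  exact hne K (tendsto_nhds_unique (tendsto_atTop_of_eventually_const hconst) ht)

lemma hasSum_pivot_iterate_Tab {x : Fin (a + 1) → ℝ} (hx : x ∈ Lambda (a + 1))
    (h : Tendsto (fun k => ∑ i, (Tab a 1)^[k] x i) atTop (𝓝 0)) :
    HasSum (fun k => (Tab a 1)^[k] x (pivot a 1)) (∑ i, x i) := by
  refine (hasSum_iff_tendsto_nat_of_nonneg (fun k => (mapsTo_Tab.iterate k hx).1 _) _).2 ?_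
  have hpartial (n : ℕ) : ∑ k ∈ Finset.range n, (Tab a 1)^[k] x (pivot a 1) =
      ∑ i, x i - ∑ i, (Tab a 1)^[n] x i := by
    have := Finset.sum_range_sub' (fun k => ∑ i, (Tab a 1)^[k] x i) n
    simpa only [sum_iterate_Tab_succ, sub_sub_cancel, Function.iterate_zero_apply] using this
  simpa [hpartial] using (tendsto_const_nhds (x := ∑ i, x i)).sub h

end Brun

/-- Brun algorithm: for `a ≥ 2`, for a.e. `x ∈ Λ^{a+1}`,
`T_{a,1}^k(x) → 0` and `σ(x) = Σ_k (T_{a,1}^k x)_a`. -/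
theorem statement11 (a : ℕ) (ha : 2 ≤ a) :
    ∀ᵐ x : Fin (a + 1) → ℝ, x ∈ Lambda (a + 1) →
      Tendsto (fun k => (Tab a 1)^[k] x) atTop (𝓝 0) ∧
      Summable (fun k : ℕ => (Tab a 1)^[k] x ⟨a - 1, by omega⟩) ∧
      ∑ i, x i = ∑' k : ℕ, (Tab a 1)^[k] x ⟨a - 1, by omega⟩ := by
  have ha₀ : 0 < a := by omega
  have hgeneric : ∀ᵐ x : Fin (a + 1) → ℝ, ∀ k, (Tab a 1)^[k] x (pivot a 1) ≠ 0 :=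
    ae_forall_iterate (fun _ => volume_preimage_Tab_null ha₀) (Measure.ae_eval_ne _ _ 0)
  filter_upwards [hgeneric] with x hne hx
  have hσ := tendsto_sum_iterate_Tab_nhds_zero ha₀ hx hne
  have hsum := hasSum_pivot_iterate_Tab hx hσ
  exact ⟨tendsto_zero_of_nonneg_of_tendsto_sum (fun k => (mapsTo_Tab.iterate k hx).1) hσ,
    hsum.summable, hsum.tsum_eq.symm⟩
end

section
/- Let a ≥ 1 and b ≥ 2 be integers. For Lebesgue-almost every x ∈ A, the limit lim_{k→∞} T_{a,b}^k(x) is not the origin; equivalently, lim_{k→∞} (T_{a,b}^k(x))_{a+b} > 0 for almost every x ∈ A. -/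
/-!
The excess `b·x_{a+b} − σ(x)` never decreases along an orbit of `T_{a,b}`. On `Λ` we have
`x_{a+b} ≤ σ(x)`, so the excess is at most `(b − 1)·x_{a+b}`; hence the top coordinate, which is
nonincreasing along the orbit, stays above `excess(x)/(b − 1)` and converges to a positive limit
whenever `excess(x) > 0`. On `A` the excess is nonnegative, and it vanishes only on a hyperplane,
a Lebesgue null set.
-/

open MeasureTheory Filter Topology

section Excess

variable {n : ℕ}

def excess (c : ℝ) (i : Fin n) : (Fin n → ℝ) →ₗ[ℝ] ℝ :=
  c • LinearMap.proj i - ∑ j, LinearMap.proj j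

@[simp]
lemma excess_apply (c : ℝ) (i : Fin n) (x : Fin n → ℝ) :
    excess c i x = c * x i - ∑ j, x j := by
  simp [excess]

lemma ae_excess_ne_zero (c : ℝ) {i j : Fin n} (hji : j ≠ i) :
    ∀ᵐ x : Fin n → ℝ, excess c i x ≠ 0 := by
  have hker : LinearMap.ker (excess c i) ≠ ⊤ := fun htop => by
    have hj : Pi.single j (1 : ℝ) ∈ LinearMap.ker (excess c i) := htop ▸ Submodule.mem_top
    simp [Pi.single_apply, hji.symm] at hj
  rw [ae_iff]
  simp only [not_not]
  exact Measure.addHaar_submodule volume _ hker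

lemma excess_le_mul_self {c : ℝ} {x : Fin n → ℝ} (hx : ∀ j, 0 ≤ x j) (i : Fin n) :
    excess c i x ≤ (c - 1) * x i := by
  have : x i ≤ ∑ j, x j := Finset.single_le_sum (fun j _ => hx j) (Finset.mem_univ i)
  rw [excess_apply]
  linarith

end Excess

lemma le_comp_sort_of_forall_le {α : Type*} [LinearOrder α] {n : ℕ} (f : Fin n → α)
    {i : Fin n} (hi : ∀ j, j ≤ i) (j : Fin n) : f j ≤ (f ∘ Tuple.sort f) i := by
  simpa using Tuple.monotone_sort f (hi ((Tuple.sort f).symm j))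

section Tab

variable {a b : ℕ}

lemma subVec_castAdd (x : Fin (a + b) → ℝ) (j : Fin a) :
    subVec a b x (Fin.castAdd b j) = x (Fin.castAdd b j) := by
  simp [subVec]

lemma subVec_natAdd (ha : 1 ≤ a) (x : Fin (a + b) → ℝ) (j : Fin b) :
    subVec a b x (Fin.natAdd a j) = x (Fin.natAdd a j) - x ⟨a - 1, by omega⟩ := by
  simp [subVec]

lemma sum_subVec (ha : 1 ≤ a) (x : Fin (a + b) → ℝ) :
    ∑ j, subVec a b x j = ∑ j, x j - b * x ⟨a - 1, by omega⟩ := by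
  simp only [Fin.sum_univ_add, subVec_castAdd, subVec_natAdd ha, Finset.sum_sub_distrib,
    Finset.sum_const, Finset.card_univ, Fintype.card_fin, nsmul_eq_mul]
  ring

lemma sum_tab (ha : 1 ≤ a) (x : Fin (a + b) → ℝ) :
    ∑ j, Tab a b x j = ∑ j, x j - b * x ⟨a - 1, by omega⟩ :=
  (Equiv.sum_comp (Tuple.sort (subVec a b x)) (subVec a b x)).trans (sum_subVec ha x)

variable {x : Fin (a + b) → ℝ}

lemma subVec_nonneg (ha : 1 ≤ a) (hx : x ∈ Lambda (a + b)) (j : Fin (a + b)) :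
    0 ≤ subVec a b x j := by
  unfold subVec
  split_ifs with hj
  · exact hx.1 j
  · have : x ⟨a - 1, by omega⟩ ≤ x j := hx.2 (Fin.mk_le_of_le_val (by omega))
    linarith

lemma subVec_le_last (hb : 1 ≤ b) (hx : x ∈ Lambda (a + b)) (j : Fin (a + b)) :
    subVec a b x j ≤ x ⟨a + b - 1, by omega⟩ := by
  have hj : x j ≤ x ⟨a + b - 1, by omega⟩ := hx.2 (Fin.le_def.2 (by simp; omega))
  unfold subVec
  split_ifs
  · exact hj
  · linarith [hx.1 ⟨a - 1, by omega⟩]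

lemma tab_mem_lambda (ha : 1 ≤ a) (hx : x ∈ Lambda (a + b)) : Tab a b x ∈ Lambda (a + b) :=
  ⟨fun _ => subVec_nonneg ha hx _, Tuple.monotone_sort _⟩

lemma tab_iterate_mem_lambda (ha : 1 ≤ a) (hx : x ∈ Lambda (a + b)) (k : ℕ) :
    (Tab a b)^[k] x ∈ Lambda (a + b) := by
  induction k with
  | zero => exact hx
  | succ k ih => simpa only [Function.iterate_succ_apply'] using tab_mem_lambda ha ih

lemma tab_last_le (hb : 1 ≤ b) (hx : x ∈ Lambda (a + b)) :
    Tab a b x ⟨a + b - 1, by omega⟩ ≤ x ⟨a + b - 1, by omega⟩ :=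
  subVec_le_last hb hx _

lemma last_sub_le_tab_last (ha : 1 ≤ a) (hb : 1 ≤ b) (x : Fin (a + b) → ℝ) :
    x ⟨a + b - 1, by omega⟩ - x ⟨a - 1, by omega⟩ ≤ Tab a b x ⟨a + b - 1, by omega⟩ := by
  have h : subVec a b x ⟨a + b - 1, by omega⟩ ≤ Tab a b x ⟨a + b - 1, by omega⟩ :=
    le_comp_sort_of_forall_le _ (fun j => Fin.le_def.2 (by simp; omega)) _
  rwa [subVec, if_neg (show ¬a + b - 1 < a by omega)] at h

/-- `T` lowers the top coordinate by at most `x_a`, but the coordinate sum by exactly `b·x_a`. -/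
lemma excess_le_excess_tab (ha : 1 ≤ a) (hb : 1 ≤ b) (x : Fin (a + b) → ℝ) :
    excess b ⟨a + b - 1, by omega⟩ x ≤ excess b ⟨a + b - 1, by omega⟩ (Tab a b x) := by
  have := last_sub_le_tab_last ha hb x
  simp only [excess_apply, sum_tab ha]
  nlinarith [(Nat.cast_nonneg b : (0 : ℝ) ≤ b)]

lemma excess_le_excess_tab_iterate (ha : 1 ≤ a) (hb : 1 ≤ b) (x : Fin (a + b) → ℝ) (k : ℕ) :
    excess b ⟨a + b - 1, by omega⟩ x ≤ excess b ⟨a + b - 1, by omega⟩ ((Tab a b)^[k] x) := by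
  induction k with
  | zero => rfl
  | succ k ih =>
    rw [Function.iterate_succ_apply']
    exact ih.trans (excess_le_excess_tab ha hb _)

lemma tendsto_tab_iterate_last_of_excess_pos (ha : 1 ≤ a) (hb : 1 < b)
    (hx : x ∈ Lambda (a + b)) (hpos : 0 < excess b ⟨a + b - 1, by omega⟩ x) :
    ∃ L : ℝ, 0 < L ∧
      Tendsto (fun k => (Tab a b)^[k] x ⟨a + b - 1, by omega⟩) atTop (𝓝 L) := by
  set m : ℕ → ℝ := fun k => (Tab a b)^[k] x ⟨a + b - 1, by omega⟩
  have hanti : Antitone m := antitone_nat_of_succ_le fun k => by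
    simpa only [m, Function.iterate_succ_apply'] using
      tab_last_le (by omega) (tab_iterate_mem_lambda ha hx k)
  have hb1 : (0 : ℝ) < b - 1 := sub_pos.2 (by exact_mod_cast hb)
  set c := excess b ⟨a + b - 1, by omega⟩ x / (b - 1)
  have hlower : ∀ k, c ≤ m k := fun k => by
    rw [div_le_iff₀' hb1]
    exact (excess_le_excess_tab_iterate ha (by omega) x k).trans
      (excess_le_mul_self (tab_iterate_mem_lambda ha hx k).1 _)
  exact ⟨⨅ k, m k, (div_pos hpos hb1).trans_le (le_ciInf hlower),
    tendsto_atTop_ciInf hanti ⟨c, by rintro _ ⟨k, rfl⟩; exact hlower k⟩⟩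

end Tab

/-- for `a ≥ 1`, `b ≥ 2`, for a.e. `x ∈ A` the last coordinate of
the iterates converges to a strictly positive limit (so the orbit does not
converge to the origin). -/
theorem statement12 (a b : ℕ) (ha : 1 ≤ a) (hb : 2 ≤ b) :
    ∀ᵐ x : Fin (a + b) → ℝ,
      (x ∈ Lambda (a + b) ∧ ∑ i, x i ≤ (b : ℝ) * x ⟨a + b - 1, by omega⟩) →
      ∃ L : ℝ, 0 < L ∧
        Tendsto (fun k => (Tab a b)^[k] x ⟨a + b - 1, by omega⟩) atTop (𝓝 L) := by
  filter_upwards [ae_excess_ne_zero (b : ℝ) (i := ⟨a + b - 1, by omega⟩) (j := ⟨0, by omega⟩)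
    (by simp [Fin.ext_iff]; omega)] with x hne ⟨hx, hle⟩
  refine tendsto_tab_iterate_last_of_excess_pos ha hb hx (lt_of_le_of_ne ?_ hne.symm)
  rw [excess_apply]
  linarith
end
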